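/- For every real x with −1 < x < 1, Π(−x, x) − (1/2)·K(x) = π/(4(x+1)). -/

import Mathlib

open Real MeasureTheory Filter

/-- Complete elliptic integral of the first kind. -/
noncomputable def ellK (z : ℝ) : ℝ :=
  ∫ x in (0:ℝ)..1, 1 / Real.sqrt ((1 - x ^ 2) * (1 - z ^ 2 * x ^ 2))

/-- Complete elliptic integral of the third kind. -/
noncomputable def ellPi (n z : ℝ) : ℝ :=
  ∫ x in (0:ℝ)..1, 1 / ((1 - n * x ^ 2) * Real.sqrt ((1 - x ^ 2) * (1 - z ^ 2 * x ^ 2)))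

/-- Mahler measure of `P_{1,k}(x,y) = x + 1/x + y + 1/y + k`. -/
noncomputable def mahlerP1 (k : ℝ) : ℝ :=
  ∫ θ in (0:ℝ)..1, ∫ φ in (0:ℝ)..1,
    Real.log (‖
      (Complex.exp (2 * Real.pi * Complex.I * θ) +
        (Complex.exp (2 * Real.pi * Complex.I * θ))⁻¹ +
       Complex.exp (2 * Real.pi * Complex.I * φ) +
        (Complex.exp (2 * Real.pi * Complex.I * φ))⁻¹ + (k : ℂ))‖)

/-- Mahler measure of `P̃_k(x,y) = √((k+4)/(k−4))·(x + 1/x) + y − 1/y − k/√(k−4)`. -/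
noncomputable def mahlerPt (k : ℝ) : ℝ :=
  ∫ θ in (0:ℝ)..1, ∫ φ in (0:ℝ)..1,
    Real.log (‖
      ((Real.sqrt ((k + 4) / (k - 4)) : ℂ) *
        (Complex.exp (2 * Real.pi * Complex.I * θ) +
          (Complex.exp (2 * Real.pi * Complex.I * θ))⁻¹) +
       Complex.exp (2 * Real.pi * Complex.I * φ) -
        (Complex.exp (2 * Real.pi * Complex.I * φ))⁻¹ -
       ((k / Real.sqrt (k - 4) : ℝ) : ℂ))‖)

/-- `B_k(e^{2πiθ}) = √((k+4)/(k−4))·2cos(2πθ) − k/√(k−4)`, real on the unit circle. -/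
noncomputable def Bt (k θ : ℝ) : ℝ :=
  Real.sqrt ((k + 4) / (k - 4)) * (2 * Real.cos (2 * Real.pi * θ)) - k / Real.sqrt (k - 4)

/-- `y₊(e^{2πiθ}) = (−B + √(B² + 4))/2`. -/
noncomputable def yPlus (k θ : ℝ) : ℝ := (-Bt k θ + Real.sqrt ((Bt k θ) ^ 2 + 4)) / 2

/-- `y₋(e^{2πiθ}) = (−B − √(B² + 4))/2`. -/
noncomputable def yMinus (k θ : ℝ) : ℝ := (-Bt k θ - Real.sqrt ((Bt k θ) ^ 2 + 4)) / 2

/-- Half-Mahler measure `m⁺(P̃_k) = ∫₀¹ log⁺|y₊(e^{2πiθ})| dθ`. -/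
noncomputable def mPlus (k : ℝ) : ℝ := ∫ θ in (0:ℝ)..1, max 0 (Real.log |yPlus k θ|)

/-- Half-Mahler measure `m⁻(P̃_k) = ∫₀¹ log⁺|y₋(e^{2πiθ})| dθ`. -/
noncomputable def mMinus (k : ℝ) : ℝ := ∫ θ in (0:ℝ)..1, max 0 (Real.log |yMinus k θ|)

/-!
The integrand of `Π(-x, x) - K(x) / 2` is
`(1 - x t²) / (2 (1 + x t²) √((1 - t²)(1 - x² t²)))`, the derivative of
`arcsin ((1 + x) t / (1 + x t²)) / (2 (1 + x))`; this rests on the factorisation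
`(1 + x t²)² - (1 + x)² t² = (1 - t²)(1 - x² t²)`. The antiderivative is continuous on `[0, 1]`,
vanishes at `0` and equals `arcsin 1 / (2 (1 + x)) = π / (4 (1 + x))` at `1`.
-/

open Set intervalIntegral

section

variable {x : ℝ}

lemma abs_mul_sq_lt_one {u : ℝ} (hx : |x| < 1) (hu : u ^ 2 ≤ 1) : |x * u ^ 2| < 1 := by
  rw [abs_mul, abs_sq]
  calc |x| * u ^ 2 ≤ |x| * 1 := by gcongr
    _ < 1 := by rwa [mul_one]

lemma intervalIntegrable_ellK_integrand {z : ℝ} (hz : z ^ 2 < 1) :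
    IntervalIntegrable (fun t : ℝ => 1 / √((1 - t ^ 2) * (1 - z ^ 2 * t ^ 2))) volume 0 1 := by
  have hpos : ∀ t ∈ uIcc (0 : ℝ) 1, 0 < 1 - z ^ 2 * t ^ 2 := fun t ht => by
    rw [uIcc_of_le zero_le_one] at ht
    have := abs_mul_sq_lt_one (by rwa [abs_sq]) (pow_le_one₀ ht.1 ht.2 : t ^ 2 ≤ 1)
    linarith [(abs_lt.1 this).2]
  have hsub : uIcc (0 : ℝ) 1 ⊆ uIcc (-1) 1 := uIcc_subset_uIcc (by simp) (by simp)
  refine ((Polynomial.Chebyshev.intervalIntegrable_sqrt_one_sub_sq_inv.mono_set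
    hsub).continuousOn_mul (g := fun t => (√(1 - z ^ 2 * t ^ 2))⁻¹) ?_).congr fun t ht => ?_
  · exact (continuousOn_const.sub (by fun_prop)).sqrt.inv₀ fun t ht => (sqrt_pos.2 (hpos t ht)).ne'
  · rw [sqrt_mul' _ (hpos t (uIoc_subset_uIcc ht)).le, one_div, mul_inv, mul_comm, sqrt_inv]

lemma hasDerivAt_arcsin_div_one_add_mul_sq {u : ℝ} (hx : |x| < 1) (hu : u ^ 2 < 1) :
    HasDerivAt (fun v => arcsin ((1 + x) * v / (1 + x * v ^ 2)) / (2 * (1 + x)))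
      ((1 - x * u ^ 2) / (2 * (1 + x * u ^ 2) * √((1 - u ^ 2) * (1 - x ^ 2 * u ^ 2)))) u := by
  have hx0 : 0 < 1 + x := by linarith [(abs_lt.1 hx).1]
  have hp : 0 < 1 + x * u ^ 2 := by linarith [(abs_lt.1 (abs_mul_sq_lt_one hx hu.le)).1]
  have hQ : 0 < (1 - u ^ 2) * (1 - x ^ 2 * u ^ 2) := by
    have := abs_mul_sq_lt_one (x := x ^ 2) (by rwa [abs_sq, sq_lt_one_iff_abs_lt_one]) hu.le
    exact mul_pos (by linarith) (by linarith [(abs_lt.1 this).2])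
  have hden : HasDerivAt (fun v => 1 + x * v ^ 2) (x * (2 * u)) u := by
    simpa using ((hasDerivAt_pow 2 u).const_mul x).const_add 1
  have hg : HasDerivAt (fun v => (1 + x) * v / (1 + x * v ^ 2))
      (((1 + x) * 1 * (1 + x * u ^ 2) - (1 + x) * u * (x * (2 * u))) / (1 + x * u ^ 2) ^ 2) u :=
    ((hasDerivAt_id u).const_mul (1 + x)).div hden hp.ne'
  have hsq : 1 - ((1 + x) * u / (1 + x * u ^ 2)) ^ 2
      = (1 - u ^ 2) * (1 - x ^ 2 * u ^ 2) / (1 + x * u ^ 2) ^ 2 := by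
    field_simp; ring
  have hne : ((1 + x) * u / (1 + x * u ^ 2)) ^ 2 ≠ 1 := by
    intro h; rw [h, sub_self, eq_comm] at hsq; exact (div_pos hQ (by positivity)).ne' hsq
  refine (((hasDerivAt_arcsin (fun h => hne (by rw [h]; norm_num))
    (fun h => hne (by rw [h]; norm_num))).comp u hg).div_const _).congr_deriv ?_
  rw [hsq, sqrt_div' _ (by positivity), sqrt_sq hp.le]
  field_simp
  ring

lemma continuousOn_arcsin_div_one_add_mul_sq (hx : |x| < 1) :
    ContinuousOn (fun v => arcsin ((1 + x) * v / (1 + x * v ^ 2)) / (2 * (1 + x))) (Icc 0 1) := by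
  refine (continuous_arcsin.comp_continuousOn ?_).div_const _
  refine (continuousOn_const.mul continuousOn_id).div (by fun_prop) fun v hv => ?_
  have := abs_mul_sq_lt_one hx (pow_le_one₀ hv.1 hv.2)
  linarith [(abs_lt.1 this).1]

lemma intervalIntegrable_ellPi_neg_sub_half_ellK_integrand (hx : |x| < 1) :
    IntervalIntegrable
      (fun t => (1 - x * t ^ 2) / (2 * (1 + x * t ^ 2) * √((1 - t ^ 2) * (1 - x ^ 2 * t ^ 2))))
      volume 0 1 := by
  refine intervalIntegrable_deriv_of_nonneg (g := fun v =>
    arcsin ((1 + x) * v / (1 + x * v ^ 2)) / (2 * (1 + x))) ?_ (fun u hu => ?_) (fun u hu => ?_)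
  · simpa using continuousOn_arcsin_div_one_add_mul_sq hx
  all_goals
    rw [min_eq_left zero_le_one, max_eq_right zero_le_one] at hu
  · exact hasDerivAt_arcsin_div_one_add_mul_sq hx (pow_lt_one₀ hu.1.le hu.2 two_ne_zero)
  · have := abs_lt.1 (abs_mul_sq_lt_one hx (pow_le_one₀ hu.1.le hu.2.le))
    exact div_nonneg (by linarith) (mul_nonneg (by linarith) (sqrt_nonneg _))

lemma integral_ellPi_neg_sub_half_ellK_integrand (hx : |x| < 1) :
    ∫ t in (0 : ℝ)..1,
        (1 - x * t ^ 2) / (2 * (1 + x * t ^ 2) * √((1 - t ^ 2) * (1 - x ^ 2 * t ^ 2)))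
      = π / (4 * (1 + x)) := by
  rw [integral_eq_sub_of_hasDeriv_right_of_le zero_le_one
    (continuousOn_arcsin_div_one_add_mul_sq hx)
    (fun u hu => (hasDerivAt_arcsin_div_one_add_mul_sq hx
      (pow_lt_one₀ hu.1.le hu.2 two_ne_zero)).hasDerivWithinAt)
    (intervalIntegrable_ellPi_neg_sub_half_ellK_integrand hx)]
  have hx0 : 1 + x ≠ 0 := by linarith [(abs_lt.1 hx).1]
  simp only [mul_one, one_pow, mul_zero, zero_div, div_self hx0, arcsin_one, arcsin_zero]
  field_simp
  ring

lemma ellPi_neg_eq_half_ellK_add (hx : |x| < 1) :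
    ellPi (-x) x = ellK x / 2 + ∫ t in (0 : ℝ)..1,
      (1 - x * t ^ 2) / (2 * (1 + x * t ^ 2) * √((1 - t ^ 2) * (1 - x ^ 2 * t ^ 2))) := by
  have hK := intervalIntegrable_ellK_integrand ((sq_lt_one_iff_abs_lt_one x).2 hx)
  rw [ellK, ← intervalIntegral.integral_div, ← integral_add (hK.div_const 2)
    (intervalIntegrable_ellPi_neg_sub_half_ellK_integrand hx), ellPi]
  refine integral_congr fun t ht => ?_
  rw [uIcc_of_le zero_le_one] at ht
  have hp : 1 + x * t ^ 2 ≠ 0 := by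
    linarith [(abs_lt.1 (abs_mul_sq_lt_one hx (pow_le_one₀ ht.1 ht.2))).1]
  rcases eq_or_ne (√((1 - t ^ 2) * (1 - x ^ 2 * t ^ 2))) 0 with hs | hs
  · simp [hs]
  · rw [neg_mul, sub_neg_eq_add]
    field_simp
    ring

end

/-- For every real `−1 < x < 1`, `Π(−x, x) − (1/2)·K(x) = π/(4(x+1))`. -/
theorem ellPi_neg_sub_half_ellK (x : ℝ) (hx1 : -1 < x) (hx2 : x < 1) :
    ellPi (-x) x - (1 / 2) * ellK x = Real.pi / (4 * (x + 1)) := by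
  have hx : |x| < 1 := abs_lt.2 ⟨hx1, hx2⟩
  rw [ellPi_neg_eq_half_ellK_add hx, integral_ellPi_neg_sub_half_ellK_integrand hx, add_comm x]
  ring
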